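/- If f : F_2^n → F_2 has the property that A(y) = −2^n never occurs for y ≠ 0 (equivalently Δ_f < 2^n or f(x+y) ≠ f(x)+1 for some x, for each y≠0), and f is balanced, then for every u ≠ 0 there exists y with ⟨y,u⟩ = 1 and W_f(y) ≠ 0; consequently P_0 − P_u > 0 strictly for all u ≠ 0. -/

import Mathlib

/-!
Write `F = (-1)^f`. The Walsh transform of `f` is the Hadamard transform of `F`; the Hadamard
transform turns correlations into products, and applying it twice multiplies by `2^n`. So `W_f²`
is the transform of the autocorrelation `A`, and `W_f⁴` the transform of the autocorrelation of
`A`, which is the signed count of the quadruples defining `P_u`. Transforming back,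
`2 ∑_{⟨y,u⟩=1} W_f(y)² = 2^n (2^n - A(u))` and `P_0 - P_u = 2^{-4n} ∑_{⟨y,u⟩=1} W_f(y)⁴`.
If `A(u) < 2^n` the first sum is positive, so some `y` with `⟨y,u⟩ = 1` has `W_f(y) ≠ 0`, and
then the second sum is positive as well.
-/

open Finset

/-- Inner product over F_2. -/
def ip {n : ℕ} (x y : Fin n → ZMod 2) : ZMod 2 := ∑ i, x i * y i

/-- (-1)^s for s ∈ F_2, as a rational number. -/
def sgn (s : ZMod 2) : ℚ := (-1) ^ s.val

/-- Walsh transform of f at y. -/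
def walsh {n : ℕ} (f : (Fin n → ZMod 2) → ZMod 2) (y : Fin n → ZMod 2) : ℚ :=
  ∑ z, sgn (f z + ip z y)

/-- Autocorrelation coefficient of f at y. -/
def acorr {n : ℕ} (f : (Fin n → ZMod 2) → ZMod 2) (y : Fin n → ZMod 2) : ℚ :=
  ∑ x, sgn (f x + f (x + y))

/-- P_u : probability that f(u₁)+f(u₂)+f(u₃)+f(u₄)=0 when u₁+u₂+u₃+u₄ = u,
with (u₁,u₂,u₃) uniform in (F_2^n)^3 and u₄ = u + u₁ + u₂ + u₃. -/
def probP {n : ℕ} (f : (Fin n → ZMod 2) → ZMod 2) (u : Fin n → ZMod 2) : ℚ :=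
  ((univ.filter (fun t : (Fin n → ZMod 2) × (Fin n → ZMod 2) × (Fin n → ZMod 2) =>
      f t.1 + f t.2.1 + f t.2.2 + f (t.1 + t.2.1 + t.2.2 + u) = 0)).card : ℚ) / 2 ^ (3 * n)

/-- f is balanced: it takes the value 0 on exactly 2^(n-1) inputs. -/
def IsBalancedBF {n : ℕ} (f : (Fin n → ZMod 2) → ZMod 2) : Prop :=
  (univ.filter (fun x : Fin n → ZMod 2 => f x = 0)).card = 2 ^ (n - 1)

lemma zmod_two_eq_zero_or_one (s : ZMod 2) : s = 0 ∨ s = 1 := by decide +revert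

lemma sgn_zero : sgn 0 = 1 := rfl

lemma sgn_one : sgn 1 = -1 := rfl

lemma sgn_add (a b : ZMod 2) : sgn (a + b) = sgn a * sgn b := by
  rcases zmod_two_eq_zero_or_one a with rfl | rfl <;>
    rcases zmod_two_eq_zero_or_one b with rfl | rfl <;>
    simp [sgn_zero, sgn_one, show (1 + 1 : ZMod 2) = 0 from rfl]

lemma sgn_eq_two_mul_ite_sub_one (s : ZMod 2) : sgn s = 2 * (if s = 0 then 1 else 0) - 1 := by
  rcases zmod_two_eq_zero_or_one s with rfl | rfl <;> norm_num [sgn_zero, sgn_one]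

lemma one_sub_sgn_eq_two_mul_ite (s : ZMod 2) : 1 - sgn s = 2 * (if s = 1 then 1 else 0) := by
  rcases zmod_two_eq_zero_or_one s with rfl | rfl <;> norm_num [sgn_zero, sgn_one]

lemma sum_sgn_eq_two_mul_card_sub {α : Type*} [Fintype α] (g : α → ZMod 2) :
    ∑ t, sgn (g t) = 2 * #{t | g t = 0} - Fintype.card α := by
  simp only [sgn_eq_two_mul_ite_sub_one, sum_sub_distrib, ← mul_sum, sum_boole, sum_const,
    card_univ, nsmul_eq_mul, mul_one]

section HadamardTransform

variable {n : ℕ}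

local notation "V" => Fin n → ZMod 2

lemma ip_eq_dotProduct (x y : V) : ip x y = x ⬝ᵥ y := rfl

lemma ip_comm (x y : V) : ip x y = ip y x := dotProduct_comm x y

lemma ip_add_left (x y z : V) : ip (x + y) z = ip x z + ip y z :=
  add_dotProduct x y z

lemma ip_add_right (x y z : V) : ip x (y + z) = ip x y + ip x z :=
  dotProduct_add x y z

lemma ip_zero_right (x : V) : ip x 0 = 0 := dotProduct_zero x

lemma sum_sgn_ip (a : V) : ∑ z : V, sgn (ip z a) = if a = 0 then 2 ^ n else 0 := by
  split_ifs with ha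
  · simp [ha, ip_zero_right, sgn_zero]
  · obtain ⟨i, hi⟩ := Function.ne_iff.mp ha
    have hai : a i = 1 := (zmod_two_eq_zero_or_one (a i)).resolve_left hi
    have hflip (z : V) : sgn (ip (z + Pi.single i 1) a) = -sgn (ip z a) := by
      have hsingle : ip (Pi.single i 1) a = 1 := by
        rw [ip_comm, ip_eq_dotProduct, dotProduct_single, mul_one, hai]
      rw [ip_add_left, sgn_add, hsingle, sgn_one, mul_neg_one]
    have hshift := Equiv.sum_comp (Equiv.addRight (Pi.single i 1 : V)) (fun z => sgn (ip z a))
    simp only [Equiv.coe_addRight, hflip, sum_neg_distrib] at hshift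
    linarith

def hadamardTransform (F : V → ℚ) (y : V) : ℚ := ∑ z, F z * sgn (ip z y)

def correlation (F G : V → ℚ) (v : V) : ℚ := ∑ x, F x * G (x + v)

lemma walsh_eq_hadamardTransform (f : V → ZMod 2) : walsh f = hadamardTransform (sgn ∘ f) := by
  ext y
  simp only [walsh, hadamardTransform, Function.comp_apply, sgn_add]

lemma acorr_eq_correlation (f : V → ZMod 2) : acorr f = correlation (sgn ∘ f) (sgn ∘ f) := by
  ext y
  simp only [acorr, correlation, Function.comp_apply, sgn_add]

lemma sum_shift_mul_sgn_ip (G : V → ℚ) (x y : V) :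
    ∑ v, G (x + v) * sgn (ip v y) = sgn (ip x y) * hadamardTransform G y := by
  rw [← Equiv.sum_comp (Equiv.addLeft x), hadamardTransform, mul_sum]
  refine sum_congr rfl fun w _ => ?_
  simp only [Equiv.coe_addLeft, ← add_assoc, ZModModule.add_self, zero_add, ip_add_left, sgn_add]
  ring

lemma hadamardTransform_correlation (F G : V → ℚ) (y : V) :
    hadamardTransform (correlation F G) y = hadamardTransform F y * hadamardTransform G y := by
  calc hadamardTransform (correlation F G) y = ∑ x, F x * ∑ v, G (x + v) * sgn (ip v y) := by
        simp only [hadamardTransform, correlation, sum_mul, mul_sum, mul_assoc]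
        exact sum_comm
    _ = hadamardTransform F y * hadamardTransform G y := by
        simp only [sum_shift_mul_sgn_ip, hadamardTransform, sum_mul, mul_assoc]

lemma hadamardTransform_hadamardTransform (H : V → ℚ) (u : V) :
    hadamardTransform (hadamardTransform H) u = 2 ^ n * H u := by
  calc hadamardTransform (hadamardTransform H) u = ∑ z, H z * ∑ y : V, sgn (ip y (z + u)) := by
        simp only [hadamardTransform, sum_mul, mul_sum, ip_add_right, sgn_add]
        rw [sum_comm]
        exact sum_congr rfl fun z _ => sum_congr rfl fun y _ => by rw [ip_comm z y]; ring
    _ = 2 ^ n * H u := by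
        simp only [sum_sgn_ip, add_eq_zero_iff_eq_neg, ZModModule.neg_eq_self, mul_ite, mul_zero,
          sum_ite_eq', mem_univ, if_true, mul_comm]

lemma hadamardTransform_zero_sub (G : V → ℚ) (u : V) :
    hadamardTransform G 0 - hadamardTransform G u = 2 * ∑ y with ip y u = 1, G y := by
  simp only [hadamardTransform, ip_zero_right, sgn_zero, mul_one, ← sum_sub_distrib, ← mul_one_sub,
    one_sub_sgn_eq_two_mul_ite, sum_filter, mul_sum]
  exact sum_congr rfl fun y _ => by split_ifs <;> ring

lemma acorr_zero (f : V → ZMod 2) : acorr f 0 = 2 ^ n := by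
  simp [acorr, ZModModule.add_self, sgn_zero]

lemma walsh_sq (f : V → ZMod 2) : (fun y => walsh f y ^ 2) = hadamardTransform (acorr f) := by
  ext y
  rw [acorr_eq_correlation, hadamardTransform_correlation, walsh_eq_hadamardTransform, sq]

lemma walsh_pow_four (f : V → ZMod 2) :
    (fun y => walsh f y ^ 4) = hadamardTransform (correlation (acorr f) (acorr f)) := by
  ext y
  rw [hadamardTransform_correlation, ← walsh_sq, show 4 = 2 * 2 from rfl, pow_mul, sq]

lemma sum_sgn_quadruple_eq_correlation_acorr (f : V → ZMod 2) (u : V) :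
    ∑ t : V × V × V, sgn (f t.1 + f t.2.1 + f t.2.2 + f (t.1 + t.2.1 + t.2.2 + u)) =
      correlation (acorr f) (acorr f) u := by
  symm
  calc correlation (acorr f) (acorr f) u
      = ∑ a, ∑ b, ∑ x, sgn (f a) * sgn (f (a + x)) * (sgn (f b) * sgn (f (b + (x + u)))) := by
        simp only [correlation, acorr, sgn_add, sum_mul_sum]
        exact sum_comm_cycle.symm
    _ = ∑ a, ∑ b, ∑ c, sgn (f a) * sgn (f b) * sgn (f c) * sgn (f (a + b + c + u)) := by
        refine sum_congr rfl fun a _ => sum_congr rfl fun b _ => ?_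
        -- substitute `x = a + c`
        rw [← Equiv.sum_comp (Equiv.addLeft a)]
        refine sum_congr rfl fun c _ => ?_
        simp only [Equiv.coe_addLeft, ← add_assoc, ZModModule.add_self, zero_add]
        rw [show b + a + c + u = a + b + c + u by abel]
        ring
    _ = _ := by simp only [Fintype.sum_prod_type, sgn_add]

lemma probP_eq (f : V → ZMod 2) (u : V) :
    probP f u = (1 + correlation (acorr f) (acorr f) u / 2 ^ (3 * n)) / 2 := by
  have hcard : (Fintype.card (V × V × V) : ℚ) = 2 ^ (3 * n) := by
    simp only [Fintype.card_prod, Fintype.card_fun, ZMod.card, Fintype.card_fin]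
    push_cast
    ring
  rw [← sum_sgn_quadruple_eq_correlation_acorr, sum_sgn_eq_two_mul_card_sub, hcard, probP]
  field_simp
  ring

lemma two_mul_sum_walsh_sq_of_ip_eq_one (f : V → ZMod 2) (u : V) :
    2 * ∑ y with ip y u = 1, walsh f y ^ 2 = 2 ^ n * (2 ^ n - acorr f u) := by
  rw [← hadamardTransform_zero_sub, walsh_sq, hadamardTransform_hadamardTransform,
    hadamardTransform_hadamardTransform, acorr_zero]
  ring

lemma probP_zero_sub_probP (f : V → ZMod 2) (u : V) :
    probP f 0 - probP f u = (∑ y with ip y u = 1, walsh f y ^ 4) / 2 ^ (4 * n) := by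
  have h : 2 * ∑ y with ip y u = 1, walsh f y ^ 4 =
      2 ^ n * (correlation (acorr f) (acorr f) 0 - correlation (acorr f) (acorr f) u) := by
    rw [← hadamardTransform_zero_sub, walsh_pow_four, hadamardTransform_hadamardTransform,
      hadamardTransform_hadamardTransform, mul_sub]
  rw [eq_div_iff_mul_eq (by positivity), ← mul_left_cancel_iff_of_pos two_pos, h, probP_eq,
    probP_eq, show 4 * n = 3 * n + n by ring, pow_add]
  field_simp
  ring

end HadamardTransform

theorem strict_gap_of_good_autocorrelation_general {n : ℕ} (f : (Fin n → ZMod 2) → ZMod 2)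
    (hauto : ∀ y : Fin n → ZMod 2, y ≠ 0 → |acorr f y| < 2 ^ n) :
    ∀ u : Fin n → ZMod 2, u ≠ 0 →
      (∃ y : Fin n → ZMod 2, ip y u = 1 ∧ walsh f y ≠ 0) ∧
      0 < probP f 0 - probP f u := by
  intro u hu
  have hsq : 0 < 2 * ∑ y with ip y u = 1, walsh f y ^ 2 := by
    rw [two_mul_sum_walsh_sq_of_ip_eq_one]
    exact mul_pos (by positivity) (sub_pos.mpr (abs_lt.mp (hauto u hu)).2)
  obtain ⟨y, hy, hy_sq⟩ := exists_ne_zero_of_sum_ne_zero (pos_of_mul_pos_right hsq zero_le_two).ne'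
  have hW : walsh f y ≠ 0 := (pow_ne_zero_iff two_ne_zero).mp hy_sq
  refine ⟨⟨y, (mem_filter.mp hy).2, hW⟩, ?_⟩
  rw [probP_zero_sub_probP]
  exact div_pos (sum_pos' (fun _ _ => by positivity) ⟨y, hy, by positivity⟩) (by positivity)

theorem strict_gap_of_good_autocorrelation {n : ℕ} (f : (Fin n → ZMod 2) → ZMod 2)
    (hbal : walsh f 0 = 0)
    (hauto : ∀ y : Fin n → ZMod 2, y ≠ 0 → |acorr f y| < 2 ^ n) :
    ∀ u : Fin n → ZMod 2, u ≠ 0 →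
      (∃ y : Fin n → ZMod 2, ip y u = 1 ∧ walsh f y ≠ 0) ∧
      0 < probP f 0 - probP f u :=
  strict_gap_of_good_autocorrelation_general f hauto
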